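/- Let g be a 3-Lie algebra and N a Nijenhuis operator. Then for every k ≥ 1, N^k is also a Nijenhuis operator, i.e. N^k[x₁,x₂,x₃]_{N^k} = [N^k x₁,N^k x₂,x₃]+[N^k x₁,x₂,N^k x₃]+[x₁,N^k x₂,N^k x₃] and [N^k x₁,N^k x₂,N^k x₃] = 0. -/
import Mathlib


/-- Deformation of a trilinear bracket `μ` by a linear operator `M`:
`μ_M(x₁,x₂,x₃) = μ(Mx₁,x₂,x₃) + μ(x₁,Mx₂,x₃) + μ(x₁,x₂,Mx₃) − M μ(x₁,x₂,x₃)`. -/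
def deform {K : Type*} [Field K] {g : Type*} [AddCommGroup g] [Module K g]
    (M : Module.End K g) (μ : g → g → g → g) : g → g → g → g :=
  fun x y z => μ (M x) y z + μ x (M y) z + μ x y (M z) - M (μ x y z)

/-- `N` is a Nijenhuis operator for the 3-Lie bracket `b`: conditions (17) and (15). -/
def IsNijenhuis {K : Type*} [Field K] {g : Type*} [AddCommGroup g] [Module K g]
    (b : g →ₗ[K] g →ₗ[K] g →ₗ[K] g) (N : Module.End K g) : Prop :=
  (∀ x y z, N (deform N (fun u v w => b u v w) x y z)
      = b (N x) (N y) z + b (N x) y (N z) + b x (N y) (N z))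
  ∧ (∀ x y z, b (N x) (N y) (N z) = 0)

/-! ### Auxiliary commutative-ring lemmas -/

/-- A combined divisibility lemma in an arbitrary commutative ring. -/
theorem threeLie_aux_key (R : Type*) [CommRing R] (t u v w : R) : ∀ n : ℕ,
    ∃ h1 h2 h3 q r α β : R,
      t^(n+1) - u^(n+1) = (t-u)*h1 ∧
      t^(n+1) - v^(n+1) = (t-v)*h2 ∧
      t^(n+1) - w^(n+1) = (t-w)*h3 ∧
      t^(n+1) - u^(n+1) - v^(n+1) = (t-u-v)*q + u*v*r ∧
      h1*h2 - w^n*q = (t-w)*α + u*v*β := by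
  intro n
  induction n with
  | zero => exact ⟨1,1,1,1,0,0,0, by ring, by ring, by ring, by ring, by ring⟩
  | succ n ih =>
    obtain ⟨h1,h2,h3,q,r,α,β,E1,E2,E3,E4,E5⟩ := ih
    refine ⟨t*h1 + u^(n+1), t*h2 + v^(n+1), t*h3 + w^(n+1),
      t*q + u^(n+1) + v^(n+1), t*r + u^n + v^n,
      t*h1*h2 + t*w*α + (u^(n+1)+v^(n+1))*h3,
      t*w*β + v^n*h1 + u^n*h2 - u^n*v^n, ?_, ?_, ?_, ?_, ?_⟩
    · linear_combination t*E1
    · linear_combination t*E2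
    · linear_combination t*E3
    · linear_combination t*E4
    · linear_combination t*w*E5 + (u^(n+1)+v^(n+1))*E3 - v^(n+1)*E1 - u^(n+1)*E2

/-- Ideal membership: the "Nijenhuis polynomial" of `N^k` lies in the ideal generated by the
Nijenhuis polynomial of `N` together with `u*v*w`. -/
theorem threeLie_aux_memb (R : Type*) [CommRing R] (t u v w : R) (n : ℕ) :
    ∃ c d : R,
      t^(2*(n+1)) - t^(n+1)*(u^(n+1)+v^(n+1)+w^(n+1))
        + (u^(n+1)*v^(n+1) + u^(n+1)*w^(n+1) + v^(n+1)*w^(n+1))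
      = c * (t^2 - t*(u+v+w) + (u*v+u*w+v*w)) + d * (u*v*w) := by
  obtain ⟨h1,h2,h3,q,r,α,β,E1,E2,E3,E4,E5⟩ := threeLie_aux_key R t u v w n
  refine ⟨h1*h2 + w*α, (t-u-v)*β - α - w^n*r, ?_⟩
  linear_combination (t^(n+1) - v^(n+1))*E1 + (t-u)*h1*E2 - w^(n+1)*E4 + w*(t-u-v)*E5

/-! ### Operators on the space of trilinear maps -/

section auxops
variable {K : Type*} [Field K] {g : Type*} [AddCommGroup g] [Module K g] (N : Module.End K g)

/-- Post-composition with `N`. -/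
def opPost : Module.End K (g → g → g → g) where
  toFun φ := fun x y z => N (φ x y z)
  map_add' φ ψ := by funext x y z; simp [Pi.add_apply]
  map_smul' c φ := by funext x y z; simp

/-- Pre-composition with `N` in the first slot. -/
def opArg1 : Module.End K (g → g → g → g) where
  toFun φ := fun x y z => φ (N x) y z
  map_add' φ ψ := rfl
  map_smul' c φ := rfl

/-- Pre-composition with `N` in the second slot. -/
def opArg2 : Module.End K (g → g → g → g) where
  toFun φ := fun x y z => φ x (N y) z
  map_add' φ ψ := rfl
  map_smul' c φ := rfl

/-- Pre-composition with `N` in the third slot. -/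
def opArg3 : Module.End K (g → g → g → g) where
  toFun φ := fun x y z => φ x y (N z)
  map_add' φ ψ := rfl
  map_smul' c φ := rfl

lemma opPost_pow_apply (m : ℕ) (φ : g → g → g → g) (x y z : g) :
    ((opPost N)^m) φ x y z = (N^m) (φ x y z) := by
  induction m generalizing φ with
  | zero => simp [opPost]
  | succ m ih => rw [pow_succ, Module.End.mul_apply, ih, pow_succ, Module.End.mul_apply]; rfl

lemma opArg1_pow_apply (m : ℕ) (φ : g → g → g → g) (x y z : g) :
    ((opArg1 N)^m) φ x y z = φ ((N^m) x) y z := by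
  induction m generalizing φ with
  | zero => simp [opArg1]
  | succ m ih => rw [pow_succ, Module.End.mul_apply, ih, pow_succ', Module.End.mul_apply]; rfl

lemma opArg2_pow_apply (m : ℕ) (φ : g → g → g → g) (x y z : g) :
    ((opArg2 N)^m) φ x y z = φ x ((N^m) y) z := by
  induction m generalizing φ with
  | zero => simp [opArg2]
  | succ m ih => rw [pow_succ, Module.End.mul_apply, ih, pow_succ', Module.End.mul_apply]; rfl

lemma opArg3_pow_apply (m : ℕ) (φ : g → g → g → g) (x y z : g) :
    ((opArg3 N)^m) φ x y z = φ x y ((N^m) z) := by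
  induction m generalizing φ with
  | zero => simp [opArg3]
  | succ m ih => rw [pow_succ, Module.End.mul_apply, ih, pow_succ', Module.End.mul_apply]; rfl

end auxops

/-- Proposition 4.5: if `N` is a Nijenhuis operator, then so is `N^k` for
every `k ≥ 1`. -/
theorem threeLie_nijenhuis_power
    {K : Type*} [Field K] {g : Type*} [AddCommGroup g] [Module K g]
    (b : g →ₗ[K] g →ₗ[K] g →ₗ[K] g)
    (hb1 : ∀ x y z, b x y z = - b y x z)
    (hb2 : ∀ x y z, b x y z = - b x z y)
    (hfi : ∀ x₁ x₂ y₁ y₂ y₃, b x₁ x₂ (b y₁ y₂ y₃)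
      = b (b x₁ x₂ y₁) y₂ y₃ + b y₁ (b x₁ x₂ y₂) y₃ + b y₁ y₂ (b x₁ x₂ y₃))
    (N : Module.End K g) (hN : IsNijenhuis b N) :
    ∀ (k : ℕ), 1 ≤ k → IsNijenhuis b (N ^ k) := by
  intro k hk
  obtain ⟨n, rfl⟩ : ∃ n, k = n + 1 := ⟨k - 1, (Nat.succ_pred_eq_of_pos hk).symm⟩
  set bfun : g → g → g → g := fun x y z => b x y z with hbfun
  -- the four commuting operators
  set T := opPost N with hT
  set U := opArg1 N with hU
  set V := opArg2 N with hV
  set W := opArg3 N with hW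
  set S : Set (Module.End K (g → g → g → g)) := {T, U, V, W} with hS
  have hcomm : ∀ a ∈ S, ∀ b' ∈ S, a * b' = b' * a := by
    intro a ha b' hb'
    simp only [hS, Set.mem_insert_iff, Set.mem_singleton_iff] at ha hb'
    rcases ha with rfl | rfl | rfl | rfl <;> rcases hb' with rfl | rfl | rfl | rfl <;>
      exact LinearMap.ext fun φ => rfl
  letI : CommRing (Algebra.adjoin K S) := Algebra.adjoinCommRingOfComm K hcomm
  have hTm : T ∈ S := by simp [hS]
  have hUm : U ∈ S := by simp [hS]
  have hVm : V ∈ S := by simp [hS]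
  have hWm : W ∈ S := by simp [hS]
  obtain ⟨c, d, hcd⟩ := threeLie_aux_memb (Algebra.adjoin K S)
    ⟨T, Algebra.subset_adjoin hTm⟩ ⟨U, Algebra.subset_adjoin hUm⟩
    ⟨V, Algebra.subset_adjoin hVm⟩ ⟨W, Algebra.subset_adjoin hWm⟩ n
  have hE' : T^(2*(n+1)) - T^(n+1)*(U^(n+1)+V^(n+1)+W^(n+1))
        + (U^(n+1)*V^(n+1) + U^(n+1)*W^(n+1) + V^(n+1)*W^(n+1))
      = (c : Module.End K (g → g → g → g))
          * (T^2 - T*(U+V+W) + (U*V+U*W+V*W))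
        + (d : Module.End K (g → g → g → g)) * (U*V*W) := congrArg Subtype.val hcd
  -- the two Nijenhuis hypotheses, operator form
  have hF : (T^2 - T*(U+V+W) + (U*V+U*W+V*W)) bfun = 0 := by
    funext x y z
    have h1 := hN.1 x y z
    simp only [deform, map_add, map_sub] at h1
    have h2 := neg_eq_zero.mpr (sub_eq_zero_of_eq h1)
    show (T^2 - T*(U+V+W) + (U*V+U*W+V*W)) bfun x y z = 0
    simp only [hT, hU, hV, hW, hbfun, pow_two, LinearMap.sub_apply, LinearMap.add_apply,
      Module.End.mul_apply, Pi.sub_apply, Pi.add_apply, opPost, opArg1, opArg2, opArg3,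
      LinearMap.coe_mk, AddHom.coe_mk, map_add]
    rw [← h2]; abel
  have hG3 : (U*V*W) bfun = 0 := by
    funext x y z
    exact hN.2 x y z
  have hRT : ((c : Module.End K (g → g → g → g))
          * (T^2 - T*(U+V+W) + (U*V+U*W+V*W))
        + (d : Module.End K (g → g → g → g)) * (U*V*W)) bfun = 0 := by
    rw [LinearMap.add_apply, Module.End.mul_apply, Module.End.mul_apply, hF, hG3,
      map_zero, map_zero, add_zero]
  have hLT : (T^(2*(n+1)) - T^(n+1)*(U^(n+1)+V^(n+1)+W^(n+1))
        + (U^(n+1)*V^(n+1) + U^(n+1)*W^(n+1) + V^(n+1)*W^(n+1))) bfun = 0 := by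
    rw [hE']; exact hRT
  constructor
  · intro x y z
    have h0 := congrFun (congrFun (congrFun hLT x) y) z
    simp only [hT, hU, hV, hW, hbfun, LinearMap.sub_apply, LinearMap.add_apply,
      Module.End.mul_apply, Pi.sub_apply, Pi.add_apply, Pi.zero_apply,
      opPost_pow_apply, opArg1_pow_apply, opArg2_pow_apply, opArg3_pow_apply,
      map_add] at h0
    have hsplit : ((N^(2*(n+1)) : Module.End K g)) (b x y z)
        = (N^(n+1)) ((N^(n+1)) (b x y z)) := by
      rw [two_mul, pow_add, Module.End.mul_apply]
    rw [hsplit] at h0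
    simp only [deform, map_add, map_sub]
    rw [← sub_eq_zero]
    have h3 := neg_eq_zero.mpr h0
    rw [← h3]; abel
  · intro x y z
    rw [pow_succ']
    simp only [Module.End.mul_apply]
    exact hN.2 _ _ _
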